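/- Define, for n×n real matrices L, F, G, the Sklyanin bracket value Skl(L;F,G) = ((L⊙ρ(L_A), [[F,G]])) − ((L, [[F⊙ρ(L_A) + a(L⊙F), G]] + [[F, G⊙ρ(L_A) + a(L⊙G)]])) and the Semenov-Tian-Shansky bracket value Sem(L;F,G) = ((L, a([[F,G]]) − [[a(F),G]] − [[F,a(G)]])). Then for every real number μ and all n×n real matrices L, F, G, the pencil relation Skl(L − μI; F, G) = Skl(L;F,G) − μ·Sem(L;F,G) holds. -/
import Mathlib


open Matrix

noncomputable section

/-- Symmetric part of a matrix. -/
def symPart {n : ℕ} (L : Matrix (Fin n) (Fin n) ℝ) : Matrix (Fin n) (Fin n) ℝ :=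
  (1/2 : ℝ) • (L + Lᵀ)

/-- Antisymmetric part of a matrix. -/
def skewPart {n : ℕ} (L : Matrix (Fin n) (Fin n) ℝ) : Matrix (Fin n) (Fin n) ℝ :=
  (1/2 : ℝ) • (L - Lᵀ)

/-- Commutator. -/
def mcomm {n : ℕ} (A B : Matrix (Fin n) (Fin n) ℝ) : Matrix (Fin n) (Fin n) ℝ :=
  A * B - B * A

/-- Jordan product. -/
def jord {n : ℕ} (A B : Matrix (Fin n) (Fin n) ℝ) : Matrix (Fin n) (Fin n) ℝ :=
  (1/2 : ℝ) • (A * B + B * A)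

/-- The non-standard Lie bracket [[L,M]]. -/
def dbr {n : ℕ} (L M : Matrix (Fin n) (Fin n) ℝ) : Matrix (Fin n) (Fin n) ℝ :=
  mcomm (symPart L) (symPart M) - mcomm (skewPart L) (skewPart M)
    - mcomm (symPart L) (skewPart M) - mcomm (skewPart L) (symPart M)

/-- The commutative product L ⊙ M. -/
def odot {n : ℕ} (L M : Matrix (Fin n) (Fin n) ℝ) : Matrix (Fin n) (Fin n) ℝ :=
  jord (symPart L) (symPart M) - jord (skewPart L) (skewPart M)
    + jord (skewPart L) (symPart M) + jord (symPart L) (skewPart M)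

/-- ρ(L) = L_p − L_n: strictly upper part minus strictly lower part. -/
def rho {n : ℕ} (L : Matrix (Fin n) (Fin n) ℝ) : Matrix (Fin n) (Fin n) ℝ :=
  Matrix.of fun i j => if i < j then L i j else if j < i then -(L i j) else 0

/-- a(L) = ρ(L_S). -/
def aMap {n : ℕ} (L : Matrix (Fin n) (Fin n) ℝ) : Matrix (Fin n) (Fin n) ℝ :=
  rho (symPart L)

/-- The scalar product ((L,M)) = tr(L Mᵀ). -/
def form {n : ℕ} (L M : Matrix (Fin n) (Fin n) ℝ) : ℝ :=
  (L * Mᵀ).trace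

/-- The Sklyanin bracket value carried on gl(n). -/
def Skl {n : ℕ} (L F G : Matrix (Fin n) (Fin n) ℝ) : ℝ :=
  form (odot L (rho (skewPart L))) (dbr F G)
    - form L (dbr (odot F (rho (skewPart L)) + aMap (odot L F)) G
        + dbr F (odot G (rho (skewPart L)) + aMap (odot L G)))

/-- The Semenov-Tian-Shansky bracket value carried on gl(n). -/
def Sem {n : ℕ} (L F G : Matrix (Fin n) (Fin n) ℝ) : ℝ :=
  form L (aMap (dbr F G) - dbr (aMap F) G - dbr F (aMap G))


namespace SklAux

variable {n : ℕ}

local notation "Mat" => Matrix (Fin n) (Fin n) ℝ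

lemma form_eq_sum (X Y : Mat) : form X Y = ∑ i, ∑ j, X i j * Y i j := by
  simp [form, Matrix.trace, Matrix.mul_apply, Matrix.diag]

lemma form_add_right (L X Y : Mat) : form L (X + Y) = form L X + form L Y := by
  simp [form_eq_sum, mul_add, Finset.sum_add_distrib]

lemma form_sub_right (L X Y : Mat) : form L (X - Y) = form L X - form L Y := by
  simp [form_eq_sum, mul_sub, Finset.sum_sub_distrib]

lemma form_smul_right (c : ℝ) (L X : Mat) : form L (c • X) = c * form L X := by
  simp only [form_eq_sum, Matrix.smul_apply, smul_eq_mul, Finset.mul_sum]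
  exact Finset.sum_congr rfl fun i _ => Finset.sum_congr rfl fun j _ => by ring

lemma form_sub_left (X Y L : Mat) : form (X - Y) L = form X L - form Y L := by
  simp [form_eq_sum, sub_mul, Finset.sum_sub_distrib]

lemma form_smul_left (c : ℝ) (X L : Mat) : form (c • X) L = c * form X L := by
  simp only [form_eq_sum, Matrix.smul_apply, smul_eq_mul, Finset.mul_sum]
  exact Finset.sum_congr rfl fun i _ => Finset.sum_congr rfl fun j _ => by ring

lemma form_smul_one_left (c : ℝ) (X : Mat) :
    form (c • (1 : Mat)) X = c * X.trace := by
  simp [form, Matrix.trace_mul_comm, Matrix.trace_transpose]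

lemma form_one_left (X : Mat) : form (1 : Mat) X = X.trace := by
  simp [form, Matrix.trace_transpose]

lemma trace_mcomm (A B : Mat) : (mcomm A B).trace = 0 := by
  simp [mcomm, Matrix.trace_sub, Matrix.trace_mul_comm A B]

lemma trace_dbr (A B : Mat) : (dbr A B).trace = 0 := by
  simp [dbr, Matrix.trace_sub, trace_mcomm]

lemma symPart_sub_smul_one (μ : ℝ) (L : Mat) :
    symPart (L - μ • (1 : Mat)) = symPart L - μ • (1 : Mat) := by
  simp only [symPart, transpose_sub, transpose_smul, transpose_one]
  module

lemma skewPart_sub_smul_one (μ : ℝ) (L : Mat) :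
    skewPart (L - μ • (1 : Mat)) = skewPart L := by
  simp only [skewPart, transpose_sub, transpose_smul, transpose_one]
  module

lemma symPart_add_skewPart (M : Mat) : symPart M + skewPart M = M := by
  simp only [symPart, skewPart]; module

lemma rho_sub (X Y : Mat) : rho (X - Y) = rho X - rho Y := by
  ext i j
  simp only [rho, Matrix.of_apply, Matrix.sub_apply]
  split_ifs <;> ring

lemma rho_add (X Y : Mat) : rho (X + Y) = rho X + rho Y := by
  ext i j
  simp only [rho, Matrix.of_apply, Matrix.add_apply]
  split_ifs <;> ring

lemma rho_smul (c : ℝ) (X : Mat) : rho (c • X) = c • rho X := by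
  ext i j
  simp only [rho, Matrix.of_apply, Matrix.smul_apply, smul_eq_mul]
  split_ifs <;> ring

lemma rho_one : rho (1 : Mat) = 0 := by
  ext i j
  simp only [rho, Matrix.of_apply, Matrix.one_apply, Matrix.zero_apply]
  rcases lt_trichotomy i j with h | h | h
  · rw [if_pos h]; simp [Matrix.one_apply, ne_of_lt h]
  · subst h; rw [if_neg (lt_irrefl i), if_neg (lt_irrefl i)]
  · rw [if_neg (asymm h), if_pos h]; simp [Matrix.one_apply, (ne_of_lt h).symm]

lemma aMap_sub_smul (μ : ℝ) (X Y : Mat) :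
    aMap (X - μ • Y) = aMap X - μ • aMap Y := by
  simp only [aMap, symPart, transpose_sub, transpose_smul]
  rw [show (1/2 : ℝ) • (X - μ • Y + (Xᵀ - μ • Yᵀ))
      = (1/2 : ℝ) • (X + Xᵀ) - μ • ((1/2 : ℝ) • (Y + Yᵀ)) by module,
    rho_sub, rho_smul μ]

lemma jord_sub_left (X Y Z : Mat) : jord (X - Y) Z = jord X Z - jord Y Z := by
  simp only [jord, sub_mul, mul_sub]; module

lemma jord_smul_one_left (c : ℝ) (Z : Mat) : jord (c • (1 : Mat)) Z = c • Z := by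
  simp only [jord, Matrix.smul_mul, Matrix.mul_smul, Matrix.one_mul, Matrix.mul_one]
  module

lemma mcomm_sub_left (X Y Z : Mat) : mcomm (X - Y) Z = mcomm X Z - mcomm Y Z := by
  simp only [mcomm, sub_mul, mul_sub]; abel

lemma mcomm_sub_right (X Y Z : Mat) : mcomm X (Y - Z) = mcomm X Y - mcomm X Z := by
  simp only [mcomm, sub_mul, mul_sub]; abel

lemma mcomm_smul_left (c : ℝ) (X Z : Mat) : mcomm (c • X) Z = c • mcomm X Z := by
  simp only [mcomm, Matrix.smul_mul, Matrix.mul_smul, smul_sub]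

lemma mcomm_smul_right (c : ℝ) (X Z : Mat) : mcomm X (c • Z) = c • mcomm X Z := by
  simp only [mcomm, Matrix.smul_mul, Matrix.mul_smul, smul_sub]

lemma mcomm_smul_one_left (c : ℝ) (Z : Mat) : mcomm (c • (1 : Mat)) Z = 0 := by
  simp [mcomm, Matrix.smul_mul]

lemma symPart_sub (X Y : Mat) : symPart (X - Y) = symPart X - symPart Y := by
  simp only [symPart, transpose_sub]; module

lemma symPart_smul (c : ℝ) (X : Mat) : symPart (c • X) = c • symPart X := by
  simp only [symPart, transpose_smul]; module

lemma skewPart_sub (X Y : Mat) : skewPart (X - Y) = skewPart X - skewPart Y := by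
  simp only [skewPart, transpose_sub]; module

lemma skewPart_smul (c : ℝ) (X : Mat) : skewPart (c • X) = c • skewPart X := by
  simp only [skewPart, transpose_smul]; module

lemma odot_sub_smul_one (μ : ℝ) (L M : Mat) :
    odot (L - μ • (1 : Mat)) M = odot L M - μ • M := by
  simp only [odot, symPart_sub_smul_one, skewPart_sub_smul_one, jord_sub_left,
    jord_smul_one_left]
  rw [show jord (symPart L) (symPart M) - μ • symPart M - jord (skewPart L) (skewPart M)
      + jord (skewPart L) (symPart M) + (jord (symPart L) (skewPart M) - μ • skewPart M)
      = jord (symPart L) (symPart M) - jord (skewPart L) (skewPart M)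
      + jord (skewPart L) (symPart M) + jord (symPart L) (skewPart M)
      - μ • (symPart M + skewPart M) by module, symPart_add_skewPart]

lemma dbr_sub_smul_one_left (μ : ℝ) (L M : Mat) :
    dbr (L - μ • (1 : Mat)) M = dbr L M := by
  simp only [dbr, symPart_sub_smul_one, skewPart_sub_smul_one, mcomm_sub_left,
    mcomm_smul_one_left]
  abel

lemma dbr_sub_left (X Y Z : Mat) : dbr (X - Y) Z = dbr X Z - dbr Y Z := by
  simp only [dbr, symPart_sub, skewPart_sub, mcomm_sub_left]; abel

lemma dbr_smul_left (c : ℝ) (X Z : Mat) : dbr (c • X) Z = c • dbr X Z := by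
  simp only [dbr, symPart_smul, skewPart_smul, mcomm_smul_left, smul_sub]

lemma dbr_sub_right (X Y Z : Mat) : dbr X (Y - Z) = dbr X Y - dbr X Z := by
  simp only [dbr, symPart_sub, skewPart_sub, mcomm_sub_right]; abel

lemma dbr_smul_right (c : ℝ) (X Z : Mat) : dbr X (c • Z) = c • dbr X Z := by
  simp only [dbr, symPart_smul, skewPart_smul, mcomm_smul_right, smul_sub]

lemma form_rho (X Y : Mat) : form (rho X) Y = form X (rho Y) := by
  simp only [form_eq_sum]
  refine Finset.sum_congr rfl fun i _ => Finset.sum_congr rfl fun j _ => ?_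
  simp only [rho, Matrix.of_apply]
  split_ifs <;> ring

lemma form_transpose (X Y : Mat) : form Xᵀ Yᵀ = form X Y := by
  simp only [form_eq_sum, Matrix.transpose_apply]
  exact Finset.sum_comm

lemma rho_transpose (X : Mat) : rho Xᵀ = -(rho X)ᵀ := by
  ext i j
  simp only [rho, Matrix.of_apply, Matrix.neg_apply, Matrix.transpose_apply]
  rcases lt_trichotomy i j with h | h | h
  · simp [h, asymm h]
  · subst h; simp
  · simp [h, asymm h]

lemma form_rho_skew_key (L M : Mat) :
    form (rho (skewPart L)) M = form L (aMap M) := by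
  rw [form_rho]
  have h1 : skewPart L = (1/2 : ℝ) • L - (1/2 : ℝ) • Lᵀ := by
    simp only [skewPart]; module
  have h2 : form Lᵀ (rho M) = - form L (rho Mᵀ) := by
    have h2' := form_transpose L ((rho M)ᵀ)
    rw [Matrix.transpose_transpose] at h2'
    rw [h2']
    have h3 : (rho M)ᵀ = - rho Mᵀ := by
      rw [rho_transpose]; exact (neg_neg _).symm
    rw [h3]
    simp only [form_eq_sum, Matrix.neg_apply, mul_neg, Finset.sum_neg_distrib]
  rw [h1, form_sub_left, form_smul_left, form_smul_left, h2]
  have h4 : aMap M = (1/2 : ℝ) • rho M + (1/2 : ℝ) • rho Mᵀ := by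
    simp only [aMap, symPart]
    rw [show (1/2 : ℝ) • (M + Mᵀ) = (1/2 : ℝ) • M + (1/2 : ℝ) • Mᵀ by module,
      rho_add, rho_smul, rho_smul]
  rw [h4, form_add_right, form_smul_right, form_smul_right]
  ring

end SklAux

open SklAux

/-- The pencil relation Skl(L − μI; F, G) = Skl(L;F,G) − μ·Sem(L;F,G). -/
theorem stmt_15 {n : ℕ} (μ : ℝ) (L F G : Matrix (Fin n) (Fin n) ℝ) :
    Skl (L - μ • (1 : Matrix (Fin n) (Fin n) ℝ)) F G = Skl L F G - μ * Sem L F G := by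
  have hskew := skewPart_sub_smul_one μ L
  simp only [Skl, Sem, hskew, dbr_sub_smul_one_left, odot_sub_smul_one,
    aMap_sub_smul]
  rw [show odot F (rho (skewPart L)) + (aMap (odot L F) - μ • aMap F)
      = (odot F (rho (skewPart L)) + aMap (odot L F)) - μ • aMap F by module]
  rw [show odot G (rho (skewPart L)) + (aMap (odot L G) - μ • aMap G)
      = (odot G (rho (skewPart L)) + aMap (odot L G)) - μ • aMap G by module]
  rw [dbr_sub_left, dbr_smul_left, dbr_sub_right, dbr_smul_right]
  rw [show dbr (odot F (rho (skewPart L)) + aMap (odot L F)) G - μ • dbr (aMap F) G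
      + (dbr F (odot G (rho (skewPart L)) + aMap (odot L G)) - μ • dbr F (aMap G))
      = (dbr (odot F (rho (skewPart L)) + aMap (odot L F)) G
         + dbr F (odot G (rho (skewPart L)) + aMap (odot L G)))
        - μ • (dbr (aMap F) G + dbr F (aMap G)) by module]
  simp only [form_sub_left, form_sub_right, form_add_right, form_smul_left,
    form_smul_right, form_smul_one_left, form_one_left, form_rho_skew_key, Matrix.trace_sub,
    Matrix.trace_add, trace_dbr]
  ring
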